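/- Let ω₀ > 0, a ∈ ℝ^p a unit vector, λ > 0, and θ = (√ω₀ + λ)a. If X ∼ N(θ, I_p), then P(‖X‖² ≤ ω₀) ≤ exp(λ√ω₀ − ‖θ‖²/2 + ω₀/2). -/

import Mathlib

open MeasureTheory ProbabilityTheory Finset Real

/-- The law of `X ∼ N(θ, I_p)`: independent coordinates `Xᵢ ∼ N(θᵢ, 1)`. -/
noncomputable def stdGaussianVec (p : ℕ) (θ : Fin p → ℝ) : Measure (Fin p → ℝ) :=
  Measure.pi fun i => gaussianReal (θ i) 1

lemma exp_mul_gaussianPDFReal (m t x : ℝ) :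
    Real.exp (t * x) * gaussianPDFReal m 1 x
      = Real.exp (t * m + t ^ 2 / 2) * gaussianPDFReal (m + t) 1 x := by
  simp only [gaussianPDFReal, NNReal.coe_one, mul_one]
  rw [mul_left_comm, mul_left_comm (Real.exp (t * m + t ^ 2 / 2)), ← Real.exp_add,
    ← Real.exp_add]
  congr 1
  ring

lemma mgf_gaussianReal_one (m t : ℝ) :
    ∫ x, Real.exp (t * x) ∂(gaussianReal m 1) = Real.exp (t * m + t ^ 2 / 2) := by
  have hmeas : Measurable fun x => (gaussianPDFReal m 1 x).toNNReal :=
    (measurable_gaussianPDFReal m 1).real_toNNReal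
  have hd : gaussianReal m 1
      = (volume : Measure ℝ).withDensity fun x => ((gaussianPDFReal m 1 x).toNNReal : ENNReal) :=
    gaussianReal_of_var_ne_zero m one_ne_zero
  rw [hd, integral_withDensity_eq_integral_smul hmeas]
  have : ∀ x, (gaussianPDFReal m 1 x).toNNReal • Real.exp (t * x)
      = Real.exp (t * m + t ^ 2 / 2) * gaussianPDFReal (m + t) 1 x := by
    intro x
    rw [NNReal.smul_def, Real.coe_toNNReal _ (gaussianPDFReal_nonneg m 1 x), smul_eq_mul,
      mul_comm (gaussianPDFReal m 1 x), exp_mul_gaussianPDFReal]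
  simp_rw [this]
  rw [MeasureTheory.integral_const_mul, integral_gaussianPDFReal_eq_one (m + t) one_ne_zero, mul_one]

lemma integrable_exp_gaussianReal_one (m t : ℝ) :
    Integrable (fun x => Real.exp (t * x)) (gaussianReal m 1) := by
  have hmeas : Measurable fun x => (gaussianPDFReal m 1 x).toNNReal :=
    (measurable_gaussianPDFReal m 1).real_toNNReal
  have hd : gaussianReal m 1
      = (volume : Measure ℝ).withDensity fun x => ((gaussianPDFReal m 1 x).toNNReal : ENNReal) :=
    gaussianReal_of_var_ne_zero m one_ne_zero
  rw [hd, integrable_withDensity_iff_integrable_smul hmeas]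
  have : (fun x => (gaussianPDFReal m 1 x).toNNReal • Real.exp (t * x))
      = fun x => Real.exp (t * m + t ^ 2 / 2) * gaussianPDFReal (m + t) 1 x := by
    funext x
    rw [NNReal.smul_def, Real.coe_toNNReal _ (gaussianPDFReal_nonneg m 1 x), smul_eq_mul,
      mul_comm (gaussianPDFReal m 1 x), exp_mul_gaussianPDFReal]
  rw [this]
  exact (integrable_gaussianPDFReal (m + t) 1).const_mul _

lemma integrable_prod_pi {p : ℕ} (m : Fin p → ℝ) (f : Fin p → ℝ → ℝ)
    (hf : ∀ i, Integrable (f i) (gaussianReal (m i) 1)) :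
    Integrable (fun x : Fin p → ℝ => ∏ i, f i (x i))
      (Measure.pi fun i => gaussianReal (m i) 1) := by
  letI instMS : (i : Fin p) → MeasureSpace ((fun _ : Fin p => ℝ) i) :=
    fun i => ⟨gaussianReal (m i) 1⟩
  have hsf : ∀ i, SigmaFinite (@volume ℝ (instMS i)) := fun i => by
    change SigmaFinite (gaussianReal (m i) 1); infer_instance
  exact MeasureTheory.Integrable.fintype_prod_dep hf

lemma integral_prod_pi {p : ℕ} (m : Fin p → ℝ) (f : Fin p → ℝ → ℝ) :
    ∫ x : Fin p → ℝ, ∏ i, f i (x i) ∂(Measure.pi fun i => gaussianReal (m i) 1)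
      = ∏ i, ∫ x, f i x ∂(gaussianReal (m i) 1) := by
  letI instMS : (i : Fin p) → MeasureSpace ((fun _ : Fin p => ℝ) i) :=
    fun i => ⟨gaussianReal (m i) 1⟩
  have hsf : ∀ i, SigmaFinite (@volume ℝ (instMS i)) := fun i => by
    change SigmaFinite (gaussianReal (m i) 1); infer_instance
  exact MeasureTheory.integral_fintype_prod_eq_prod f

/-- Gaussian tail bound: if `X ∼ N(θ, I_p)` with `θ = (√ω₀ + λ) a` for a unit vector
`a`, then `P(‖X‖² ≤ ω₀) ≤ exp(λ√ω₀ − ‖θ‖²/2 + ω₀/2)`. -/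
theorem gaussian_ball_prob_bound {p : ℕ} (hp : 0 < p) (ω₀ lam : ℝ)
    (hω₀ : 0 < ω₀) (hlam : 0 < lam) (a : Fin p → ℝ) (ha : ∑ i, a i ^ 2 = 1)
    (θ : Fin p → ℝ) (hθ : θ = fun i => (Real.sqrt ω₀ + lam) * a i) :
    ((stdGaussianVec p θ) {x | ∑ i, x i ^ 2 ≤ ω₀}).toReal ≤
      Real.exp (lam * Real.sqrt ω₀ - (∑ i, θ i ^ 2) / 2 + ω₀ / 2) := by
  set μ := stdGaussianVec p θ with hμ
  haveI : IsProbabilityMeasure μ := by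
    rw [hμ]; unfold stdGaussianVec; infer_instance
  set T : Set (Fin p → ℝ) := {x | ∑ i, a i * x i ≤ Real.sqrt ω₀} with hT
  -- the ball is contained in the half-space T
  have hsub : {x : Fin p → ℝ | ∑ i, x i ^ 2 ≤ ω₀} ⊆ T := by
    intro x hx
    simp only [Set.mem_setOf_eq] at hx ⊢
    have h1 : (∑ i, a i * x i) ^ 2 ≤ (∑ i, a i ^ 2) * ∑ i, x i ^ 2 :=
      Finset.sum_mul_sq_le_sq_mul_sq _ _ _
    have h2 : (∑ i, a i * x i) ^ 2 ≤ ω₀ := by rw [ha, one_mul] at h1; linarith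
    calc ∑ i, a i * x i ≤ |∑ i, a i * x i| := le_abs_self _
      _ = Real.sqrt ((∑ i, a i * x i) ^ 2) := (Real.sqrt_sq_eq_abs _).symm
      _ ≤ Real.sqrt ω₀ := Real.sqrt_le_sqrt h2
  have hTmeas : MeasurableSet T := by
    apply measurableSet_le _ measurable_const
    exact Finset.measurable_sum _ fun i _ => (measurable_pi_apply i).const_mul _
  -- the dominating function
  set g : (Fin p → ℝ) → ℝ :=
    fun x => Real.exp (lam * Real.sqrt ω₀) * ∏ i, Real.exp (-(lam * a i) * x i) with hg
  have hg_eq : ∀ x, g x = Real.exp (lam * Real.sqrt ω₀ + ∑ i, -(lam * a i) * x i) := by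
    intro x
    rw [hg, Real.exp_add, Real.exp_sum]
  have hg_int : Integrable g μ := by
    apply Integrable.const_mul
    exact integrable_prod_pi θ _ fun i => integrable_exp_gaussianReal_one _ _
  have hind : ∀ x, T.indicator (fun _ => (1 : ℝ)) x ≤ g x := by
    intro x
    rw [hg_eq]
    by_cases hx : x ∈ T
    · rw [Set.indicator_of_mem hx]
      have hxT : ∑ i, a i * x i ≤ Real.sqrt ω₀ := hx
      have hsum : ∑ i, -(lam * a i) * x i = -(lam * ∑ i, a i * x i) := by
        rw [Finset.mul_sum, ← Finset.sum_neg_distrib]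
        exact Finset.sum_congr rfl fun i _ => by ring
      rw [← Real.exp_zero]
      apply Real.exp_le_exp.mpr
      rw [hsum]
      nlinarith
    · rw [Set.indicator_of_notMem hx]
      exact (Real.exp_pos _).le
  have hind_int : Integrable (T.indicator fun _ => (1 : ℝ)) μ :=
    (integrable_const 1).indicator hTmeas
  have hmono : (μ T).toReal ≤ ∫ x, g x ∂μ := by
    have h1 : ∫ x, T.indicator (fun _ => (1 : ℝ)) x ∂μ = (μ T).toReal := by
      exact integral_indicator_one (μ := μ) hTmeas
    rw [← h1]
    exact integral_mono hind_int hg_int hind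
  have hgint : ∫ x, g x ∂μ
      = Real.exp (lam * Real.sqrt ω₀)
        * ∏ i, Real.exp (-(lam * a i) * θ i + (lam * a i) ^ 2 / 2) := by
    rw [hg]
    rw [MeasureTheory.integral_const_mul]
    congr 1
    rw [hμ]
    unfold stdGaussianVec
    rw [integral_prod_pi θ (fun i y => Real.exp (-(lam * a i) * y))]
    exact Finset.prod_congr rfl fun i _ => by rw [mgf_gaussianReal_one (θ i) (-(lam * a i)), neg_sq]
  -- compute the explicit value
  have hθ2 : ∑ i, θ i ^ 2 = (Real.sqrt ω₀ + lam) ^ 2 := by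
    rw [hθ]
    simp_rw [mul_pow, ← Finset.mul_sum, ha, mul_one]
  have haθ : ∑ i, a i * θ i = Real.sqrt ω₀ + lam := by
    rw [hθ]
    have : ∀ i, a i * ((Real.sqrt ω₀ + lam) * a i) = (Real.sqrt ω₀ + lam) * a i ^ 2 := by
      intro i; ring
    simp_rw [this, ← Finset.mul_sum, ha, mul_one]
  have hval : Real.exp (lam * Real.sqrt ω₀)
      * ∏ i, Real.exp (-(lam * a i) * θ i + (lam * a i) ^ 2 / 2)
      = Real.exp (lam * Real.sqrt ω₀ - (∑ i, θ i ^ 2) / 2 + ω₀ / 2) := by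
    rw [← Real.exp_sum, ← Real.exp_add]
    congr 1
    have hsum : ∑ i, (-(lam * a i) * θ i + (lam * a i) ^ 2 / 2)
        = -(lam * (Real.sqrt ω₀ + lam)) + lam ^ 2 / 2 := by
      have : ∀ i, (-(lam * a i) * θ i + (lam * a i) ^ 2 / 2)
          = -lam * (a i * θ i) + (lam ^ 2 / 2) * a i ^ 2 := by
        intro i; ring
      simp_rw [this]
      rw [Finset.sum_add_distrib, ← Finset.mul_sum, ← Finset.mul_sum, haθ, ha, mul_one]
      ring
    rw [hsum, hθ2]
    have hs : Real.sqrt ω₀ ^ 2 = ω₀ := Real.sq_sqrt hω₀.le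
    nlinarith [hs]
  calc (μ {x : Fin p → ℝ | ∑ i, x i ^ 2 ≤ ω₀}).toReal
      ≤ (μ T).toReal := by
        apply ENNReal.toReal_mono (measure_ne_top μ T) (measure_mono hsub)
    _ ≤ ∫ x, g x ∂μ := hmono
    _ = _ := by rw [hgint, hval]
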